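/- arXiv:hep-th/0505190 — 8 statements merged into one kernel-verified Lean document; each statement's English description precedes it below -/
import Mathlib

section
/- Let χ be a Killing vector field of a spacetime (M,g), let A be a one-form satisfying L_χ A = 0, and let N be a null hypersurface (Killing horizon) on which χ is null and to which χ is tangent, such that every vector t tangent to N satisfies t = f χ for some function f along the generators (i.e., tangent vectors to N are proportional to χ on N). Then the function Φ = −A_μ χ^μ is constant on each connected component of N. -/
/-!
Along a curve in `N` the velocity is a multiple `f χ` of `χ`, so the derivative of
`A_μ χ^μ` along the curve is `f · χ(A_μ χ^μ)`. Since `L_χ χ = 0`, the Leibniz rule gives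
`χ(A_μ χ^μ) = (L_χ A)_μ χ^μ`, which vanishes because `L_χ A = 0`.
-/

open Finset

noncomputable def pd {n : ℕ} (i : Fin n) (f : (Fin n → ℝ) → ℝ) (p : Fin n → ℝ) : ℝ :=
  fderiv ℝ f p (Pi.single i 1)

section Curves

variable {E F : Type*} [NormedAddCommGroup E] [NormedSpace ℝ E]
  [NormedAddCommGroup F] [NormedSpace ℝ F]

theorem apply_eq_apply_of_fderiv_apply_eq_zero {Φ : E → F} {X : E → E} {N : Set E}
    (hΦ : ∀ p ∈ N, DifferentiableAt ℝ Φ p) (hX : ∀ p ∈ N, fderiv ℝ Φ p (X p) = 0)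
    {c : ℝ → E} (hc : Differentiable ℝ c) (hcN : ∀ s, c s ∈ N)
    (htangent : ∀ s, ∃ f : ℝ, deriv c s = f • X (c s)) (s t : ℝ) :
    Φ (c s) = Φ (c t) := by
  have hderiv (u : ℝ) : HasDerivAt (Φ ∘ c) 0 u := by
    obtain ⟨f, hf⟩ := htangent u
    have h := (hΦ _ (hcN u)).hasFDerivAt.comp_hasDerivAt u (hc u).hasDerivAt
    rwa [hf, map_smul, hX _ (hcN u), smul_zero] at h
  exact is_const_of_deriv_eq_zero (fun u => (hderiv u).differentiableAt)
    (fun u => (hderiv u).deriv) s t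

end Curves

section Coordinates

variable {n : ℕ}

theorem fderiv_apply_eq_sum_pd (f : (Fin n → ℝ) → ℝ) (p v : Fin n → ℝ) :
    fderiv ℝ f p v = ∑ i, v i * pd i f p := by
  conv_lhs => rw [← univ_sum_single v]
  simp only [map_sum, pd]
  refine sum_congr rfl fun i _ => ?_
  rw [← smul_eq_mul, ← map_smul, ← Pi.single_smul, smul_eq_mul, mul_one]

noncomputable def contraction (A χ : Fin n → (Fin n → ℝ) → ℝ) (p : Fin n → ℝ) : ℝ :=
  ∑ μ, A μ p * χ μ p

noncomputable def lieDerivOneForm (χ A : Fin n → (Fin n → ℝ) → ℝ) (μ : Fin n)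
    (p : Fin n → ℝ) : ℝ :=
  ∑ ρ, (χ ρ p * pd ρ (A μ) p + A ρ p * pd μ (χ ρ) p)

theorem fderiv_contraction_apply_self {A χ : Fin n → (Fin n → ℝ) → ℝ} {p : Fin n → ℝ}
    (hA : ∀ μ, DifferentiableAt ℝ (A μ) p) (hχ : ∀ μ, DifferentiableAt ℝ (χ μ) p) :
    fderiv ℝ (contraction A χ) p (fun μ => χ μ p) =
      ∑ μ, lieDerivOneForm χ A μ p * χ μ p := by
  have hleibniz : HasFDerivAt (contraction A χ)
      (∑ μ, (A μ p • fderiv ℝ (χ μ) p + χ μ p • fderiv ℝ (A μ) p)) p :=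
    HasFDerivAt.fun_sum fun μ _ => (hA μ).hasFDerivAt.mul (hχ μ).hasFDerivAt
  have hswap : ∑ μ, A μ p * ∑ ρ, χ ρ p * pd ρ (χ μ) p =
      ∑ μ, (∑ ρ, A ρ p * pd μ (χ ρ) p) * χ μ p := by
    simp only [mul_sum, sum_mul]
    rw [sum_comm]
    exact sum_congr rfl fun _ _ => sum_congr rfl fun _ _ => by ring
  simp only [hleibniz.fderiv, FunLike.coe_sum, Finset.sum_apply, add_apply, FunLike.coe_smul,
    Pi.smul_apply, smul_eq_mul, fderiv_apply_eq_sum_pd, sum_add_distrib, hswap, lieDerivOneForm, add_mul]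
  rw [add_comm]
  exact congrArg (· + _) (sum_congr rfl fun _ _ => mul_comm _ _)

end Coordinates

theorem stmt_5_general (n : ℕ)
    (χ A : Fin n → (Fin n → ℝ) → ℝ)
    (hχdiff : ∀ μ, Differentiable ℝ (χ μ))
    (hAdiff : ∀ μ, Differentiable ℝ (A μ))
    (hLA : ∀ μ p, (∑ ρ, (χ ρ p * pd ρ (A μ) p + A ρ p * pd μ (χ ρ) p)) = 0)
    (N : Set (Fin n → ℝ))
    (htangent : ∀ c : ℝ → (Fin n → ℝ), (∀ s, c s ∈ N) →
      (∀ μ, Differentiable ℝ (fun s => c s μ)) →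
      ∀ s : ℝ, ∃ f : ℝ, ∀ μ, deriv (fun u => c u μ) s = f * χ μ (c s)) :
    ∀ c : ℝ → (Fin n → ℝ), (∀ s, c s ∈ N) →
      (∀ μ, Differentiable ℝ (fun s => c s μ)) →
      ∀ s t : ℝ,
        -(∑ μ, A μ (c s) * χ μ (c s)) = -(∑ μ, A μ (c t) * χ μ (c t)) := by
  intro c hcN hcdiff s t
  have hdiff : Differentiable ℝ (contraction A χ) :=
    Differentiable.fun_sum fun μ _ => (hAdiff μ).mul (hχdiff μ)
  have hcontraction : ∀ p, fderiv ℝ (contraction A χ) p (fun μ => χ μ p) = 0 := fun p => by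
    rw [fderiv_contraction_apply_self (fun μ => hAdiff μ p) (fun μ => hχdiff μ p)]
    simp only [lieDerivOneForm, hLA, zero_mul, sum_const_zero]
  have hvelocity (u : ℝ) : ∃ f : ℝ, deriv c u = f • fun μ => χ μ (c u) := by
    obtain ⟨f, hf⟩ := htangent c hcN hcdiff u
    exact ⟨f, by rw [deriv_pi fun μ => hcdiff μ u]; ext μ; simp [hf]⟩
  rw [neg_inj]
  exact apply_eq_apply_of_fderiv_apply_eq_zero (fun p _ => hdiff p) (fun p _ => hcontraction p)
    (differentiable_pi.mpr hcdiff) hcN hvelocity s t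

/-- Let `χ` be a Killing vector field of `(M,g)` (`L_χ g = 0`), `A` a
one-form with `L_χ A = 0`, and `N` a null hypersurface (Killing horizon) on which `χ`
is null and tangent, such that every vector tangent to `N` is proportional to `χ`
(hypothesis `htangent`, phrased via differentiable curves lying in `N`). Then
`Φ = −A_μχ^μ` is constant on each connected component of `N` (phrased as: `Φ` is
constant along every differentiable curve lying in `N`). -/
theorem stmt_5 (n : ℕ)
    (g : Fin n → Fin n → (Fin n → ℝ) → ℝ)
    (χ A : Fin n → (Fin n → ℝ) → ℝ)
    (hgdiff : ∀ μ ν, Differentiable ℝ (g μ ν))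
    (hχdiff : ∀ μ, Differentiable ℝ (χ μ))
    (hAdiff : ∀ μ, Differentiable ℝ (A μ))
    (hKilling : ∀ μ ν p,
      (∑ ρ, (χ ρ p * pd ρ (g μ ν) p + g ρ ν p * pd μ (χ ρ) p + g μ ρ p * pd ν (χ ρ) p)) = 0)
    (hLA : ∀ μ p, (∑ ρ, (χ ρ p * pd ρ (A μ) p + A ρ p * pd μ (χ ρ) p)) = 0)
    (N : Set (Fin n → ℝ))
    (hnull : ∀ p ∈ N, (∑ μ, ∑ ν, g μ ν p * χ μ p * χ ν p) = 0)
    (htangent : ∀ c : ℝ → (Fin n → ℝ), (∀ s, c s ∈ N) →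
      (∀ μ, Differentiable ℝ (fun s => c s μ)) →
      ∀ s : ℝ, ∃ f : ℝ, ∀ μ, deriv (fun u => c u μ) s = f * χ μ (c s)) :
    ∀ c : ℝ → (Fin n → ℝ), (∀ s, c s ∈ N) →
      (∀ μ, Differentiable ℝ (fun s => c s μ)) →
      ∀ s t : ℝ,
        -(∑ μ, A μ (c s) * χ μ (c s)) = -(∑ μ, A μ (c t) * χ μ (c t)) :=
  stmt_5_general n χ A hχdiff hAdiff hLA N htangent
end

section
/- Let L be a Lagrangian density D-form on field space whose variation satisfies δL = E δψ + d Θ(ψ, δψ), where E are the equations-of-motion forms. Define the symplectic current ω(ψ, δ₁ψ, δ₂ψ) = δ₂ Θ(ψ, δ₁ψ) − δ₁ Θ(ψ, δ₂ψ). If ψ satisfies E(ψ) = 0 and δ₁ψ, δ₂ψ satisfy the linearized equations δ₁E = δ₂E = 0, then ω is closed: dω = 0. -/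
/-- **Lee–Wald.** Let `L` be a Lagrangian density form with
`δL = E δψ + dΘ(ψ,δψ)`. Abstract covariant phase space encoding: `V` is the space of
(field-configuration dependent) spacetime forms, `d` the spacetime exterior derivative,
and `δ₁, δ₂` two commuting field variations acting on `V` and commuting with `d`.
Here `E₁ = E δ₁ψ`, `E₂ = E δ₂ψ`, `Θ₁ = Θ(ψ,δ₁ψ)`, `Θ₂ = Θ(ψ,δ₂ψ)`; the Leibniz rule
gives `δ₂E₁ = (δ₂E)δ₁ψ + E δ₂δ₁ψ = Elin₂₁ + Emix` (and symmetrically, with the same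
mixed term `Emix = E δ₁δ₂ψ = E δ₂δ₁ψ` since the variations commute). On-shell
(`E(ψ) = 0`) the mixed term vanishes, and the linearized equations of motion for
`δ₁ψ, δ₂ψ` give `Elin₁₂ = Elin₂₁ = 0`. Conclusion: the symplectic current
`ω = δ₂Θ₁ − δ₁Θ₂` is closed. -/
theorem stmt_6 (V : Type*) [AddCommGroup V]
    (d δ₁ δ₂ : V →+ V)
    (L E₁ E₂ Θ₁ Θ₂ Elin₁₂ Elin₂₁ Emix : V)
    (hcomm : δ₁ (δ₂ L) = δ₂ (δ₁ L))
    (hvar₁ : δ₁ L = E₁ + d Θ₁)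
    (hvar₂ : δ₂ L = E₂ + d Θ₂)
    (hLeib₁ : δ₂ E₁ = Elin₂₁ + Emix)
    (hLeib₂ : δ₁ E₂ = Elin₁₂ + Emix)
    (hδd₁ : δ₁ (d Θ₂) = d (δ₁ Θ₂))
    (hδd₂ : δ₂ (d Θ₁) = d (δ₂ Θ₁))
    (honshell : Emix = 0)
    (hlin₁ : Elin₁₂ = 0) (hlin₂ : Elin₂₁ = 0) :
    d (δ₂ Θ₁ - δ₁ Θ₂) = 0 := by
  have h1 : δ₁ (δ₂ L) = Elin₁₂ + Emix + d (δ₁ Θ₂) := by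
    rw [hvar₂, map_add, hLeib₂, hδd₁]
  have h2 : δ₂ (δ₁ L) = Elin₂₁ + Emix + d (δ₂ Θ₁) := by
    rw [hvar₁, map_add, hLeib₁, hδd₂]
  rw [map_sub]
  have := hcomm
  rw [h1, h2, hlin₁, hlin₂, honshell] at this
  simp at this
  rw [this, sub_self]
end

section
/- In the covariant phase space formalism, let J[ξ] = Θ(ψ, L_ξ ψ) − i_ξ L be the Noether current associated to a diffeomorphism generated by ξ, where Θ is covariant (so that L_ξ Θ(ψ, δψ) = δ'Θ(ψ, δψ) with δ'ψ = L_ξ ψ). Then on-shell (E = 0), for any field variation δψ one has the identity ω(ψ, δψ, L_ξ ψ) = δ J[ξ] − d( i_ξ Θ(ψ, δψ) ). In particular, if additionally d J[ξ] = d Q[ξ] for a Noether charge form Q[ξ] and δψ solves the linearized equations, then ω(ψ, δψ, L_ξ ψ) = d( δQ[ξ] − i_ξ Θ ). -/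
/-- **Lee–Wald Noether current identity.** Abstract covariant phase space
encoding: `V` is the space of (field-configuration dependent) spacetime forms, with
exterior derivative `d`, interior product `iξ` and Lie derivative `Lξ` along a fixed
vector field `ξ` satisfying Cartan's magic formula, and a field variation `δ` commuting
with `d` and with `iξ` (since `ξ` is fixed). Here `Θδ = Θ(ψ,δψ)`, `ΘL = Θ(ψ,L_ξψ)`,
`J = ΘL − iξ L` is the Noether current, `δL = dΘδ` expresses that `ψ` is on-shell
(`E(ψ) = 0`), and covariance of `Θ` gives `LξΘδ = Θδ'` where `Θδ' = δ'Θ(ψ,δψ)` is the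
variation of `Θ(ψ,δψ)` along the field variation `δ'ψ = L_ξψ`. The symplectic current
is `ω = ω(ψ,δψ,L_ξψ) = δΘ(ψ,L_ξψ) − δ'Θ(ψ,δψ) = δ ΘL − Θδ'`. Conclusions:
`ω = δJ − d(iξ Θδ)`, and if moreover `J = dQ` for a Noether charge form `Q`, then
`ω = d(δQ − iξΘδ)`. -/
theorem stmt_7 (V : Type*) [AddCommGroup V]
    (d iξ Lξ δ : V →+ V)
    (hCartan : ∀ v : V, Lξ v = iξ (d v) + d (iξ v))
    (hδd : ∀ v : V, δ (d v) = d (δ v))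
    (hδiξ : ∀ v : V, δ (iξ v) = iξ (δ v))
    (L Θδ ΘL Θδ' J : V)
    (hJ : J = ΘL - iξ L)
    (honshell : δ L = d Θδ)
    (hcov : Lξ Θδ = Θδ') :
    let ω : V := δ ΘL - Θδ'
    (ω = δ J - d (iξ Θδ)) ∧
    (∀ Q : V, J = d Q → ω = d (δ Q - iξ Θδ)) := by
  intro ω
  have key : ω = δ J - d (iξ Θδ) := by
    have h1 : δ J = δ ΘL - iξ (d Θδ) := by
      rw [hJ, map_sub, hδiξ, honshell]
    have h2 : Θδ' = iξ (d Θδ) + d (iξ Θδ) := by rw [← hcov, hCartan]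
    show δ ΘL - Θδ' = δ J - d (iξ Θδ)
    rw [h1, h2]; abel
  refine ⟨key, fun Q hQ => ?_⟩
  rw [key, hQ, hδd, ← map_sub]
end

section
/- Define, for real parameters satisfying the stated constraints, the Kerr–Newman–AdS thermodynamic quantities (with l > 0, 0 ≤ |a| < l, q ∈ ℝ, r₊ > 0, Ξ = 1 − a²/l², and m determined by the horizon condition (r₊² + a²)(1 + r₊²/l²) − 2 m r₊ + q² = 0): M = 8πm/(κ²Ξ²), J = 8πma/(κ²Ξ²), Q = 4πq/(κ²Ξ), S = (2π/κ²)·4π(r₊²+a²)/Ξ, T = β⁻¹ with β = 4π(r₊²+a²)/[ r₊(1 + a²/l² + 3r₊²/l² − (a²+q²)/r₊²) ], Ω = a(1 + r₊²/l²)/(r₊²+a²), Φ = 2qr₊/(r₊²+a²), and the on-shell action I = (4πβ/(κ²l²Ξ))·[ m l² − r₊(r₊²+a²) − q²l²r₊/(r₊²+a²) ]. Then the quantum statistical relation I = β( M − T S − Ω J − Φ Q ) holds identically. -/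
/-!
With `D = r₊(1 + a²/l² + 3r₊²/l² - (a²+q²)/r₊²)` we have `T = D/(4π(r₊²+a²))`, so the product
`T S = 2πD/(κ²Ξ)` no longer involves `β`, and both sides of the relation are `β` times an expression
without `β`. The rotational work cancels one power of `Ξ`:
`M - ΩJ = 8πm r₊²/(κ²Ξ(r₊²+a²))`, because `(r₊²+a²) - a²(1+r₊²/l²) = r₊²Ξ`. What remains is a rational
identity which becomes polynomial once `m` is eliminated by the horizon equation.
-/

namespace KerrNewmanAdS

variable {l a q rp κ m : ℝ}

theorem mass_eq_of_horizon (hrp : rp ≠ 0)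
    (hm : (rp^2 + a^2) * (1 + rp^2/l^2) - 2*m*rp + q^2 = 0) :
    m = ((rp^2 + a^2) * (1 + rp^2/l^2) + q^2) / (2*rp) := by
  field_simp
  linarith

theorem mass_sub_angularVelocity_mul_angularMomentum (hl : l ≠ 0) (hκ : κ ≠ 0)
    (hra : rp^2 + a^2 ≠ 0) :
    8*Real.pi*m/(κ^2*(1 - a^2/l^2)^2)
        - a*(1+rp^2/l^2)/(rp^2+a^2) * (8*Real.pi*m*a/(κ^2*(1 - a^2/l^2)^2))
      = 8*Real.pi*m*rp^2/(κ^2*(1 - a^2/l^2)*(rp^2+a^2)) := by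
  have hwork : 1 - a * (a*(1+rp^2/l^2)/(rp^2+a^2)) = rp^2*(1 - a^2/l^2)/(rp^2+a^2) := by
    field_simp
    ring
  calc _ = 8*Real.pi*m/(κ^2*(1 - a^2/l^2)^2) * (1 - a * (a*(1+rp^2/l^2)/(rp^2+a^2))) := by ring
    _ = _ := by
      rw [hwork]
      field_simp

end KerrNewmanAdS

theorem stmt_9_general (l a q rp κ m : ℝ)
    (hl : 0 < l) (hrp : 0 < rp) (hκ : κ ≠ 0)
    (hm : (rp^2 + a^2) * (1 + rp^2/l^2) - 2*m*rp + q^2 = 0) :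
    let Ξ : ℝ := 1 - a^2/l^2
    let β : ℝ := 4*Real.pi*(rp^2+a^2) / (rp * (1 + a^2/l^2 + 3*rp^2/l^2 - (a^2+q^2)/rp^2))
    let M : ℝ := 8*Real.pi*m/(κ^2*Ξ^2)
    let J : ℝ := 8*Real.pi*m*a/(κ^2*Ξ^2)
    let Q : ℝ := 4*Real.pi*q/(κ^2*Ξ)
    let S : ℝ := (2*Real.pi/κ^2) * (4*Real.pi*(rp^2+a^2)/Ξ)
    let T : ℝ := 1/β
    let Ω : ℝ := a*(1+rp^2/l^2)/(rp^2+a^2)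
    let Φ : ℝ := 2*q*rp/(rp^2+a^2)
    let I : ℝ := (4*Real.pi*β/(κ^2*l^2*Ξ)) * (m*l^2 - rp*(rp^2+a^2) - q^2*l^2*rp/(rp^2+a^2))
    I = β * (M - T*S - Ω*J - Φ*Q) := by
  intro Ξ β M J Q S T Ω Φ I
  have hra : rp^2 + a^2 ≠ 0 := by positivity
  have hTS : T*S = 2*Real.pi*(rp * (1 + a^2/l^2 + 3*rp^2/l^2 - (a^2+q^2)/rp^2)) / (κ^2*Ξ) := by
    simp only [T, S, β, one_div_div]
    field_simp
  have hMJ : M - Ω*J = 8*Real.pi*m*rp^2/(κ^2*Ξ*(rp^2+a^2)) :=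
    KerrNewmanAdS.mass_sub_angularVelocity_mul_angularMomentum hl.ne' hκ hra
  calc I = β * (4*Real.pi/(κ^2*l^2*Ξ) * (m*l^2 - rp*(rp^2+a^2) - q^2*l^2*rp/(rp^2+a^2))) := by
        ring
    _ = β * ((M - Ω*J) - T*S - Φ*Q) := by
        rw [hMJ, hTS, KerrNewmanAdS.mass_eq_of_horizon hrp.ne' hm]
        congr 1
        simp only [Φ, Q, Ξ]
        field_simp
        ring
    _ = β * (M - T*S - Ω*J - Φ*Q) := by ring

/-- Quantum statistical relation `I = β(M − TS − ΩJ − ΦQ)` for the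
four-dimensional Kerr–Newman–AdS black hole, as a purely algebraic identity in the
real parameters `l, a, q, r₊, κ`, with `m` determined by the horizon condition
`Δ_r(r₊) = 0`, i.e. `(r₊²+a²)(1+r₊²/l²) − 2mr₊ + q² = 0`. -/
theorem stmt_9 (l a q rp κ m : ℝ)
    (hl : 0 < l) (ha : |a| < l) (hrp : 0 < rp) (hκ : κ ≠ 0)
    (hm : (rp^2 + a^2) * (1 + rp^2/l^2) - 2*m*rp + q^2 = 0)
    (hΞ : 1 - a^2/l^2 ≠ 0)
    (hβden : rp * (1 + a^2/l^2 + 3*rp^2/l^2 - (a^2+q^2)/rp^2) ≠ 0) :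
    let Ξ : ℝ := 1 - a^2/l^2
    let β : ℝ := 4*Real.pi*(rp^2+a^2) / (rp * (1 + a^2/l^2 + 3*rp^2/l^2 - (a^2+q^2)/rp^2))
    let M : ℝ := 8*Real.pi*m/(κ^2*Ξ^2)
    let J : ℝ := 8*Real.pi*m*a/(κ^2*Ξ^2)
    let Q : ℝ := 4*Real.pi*q/(κ^2*Ξ)
    let S : ℝ := (2*Real.pi/κ^2) * (4*Real.pi*(rp^2+a^2)/Ξ)
    let T : ℝ := 1/β
    let Ω : ℝ := a*(1+rp^2/l^2)/(rp^2+a^2)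
    let Φ : ℝ := 2*q*rp/(rp^2+a^2)
    let I : ℝ := (4*Real.pi*β/(κ^2*l^2*Ξ)) * (m*l^2 - rp*(rp^2+a^2) - q^2*l^2*rp/(rp^2+a^2))
    I = β * (M - T*S - Ω*J - Φ*Q) :=
  stmt_9_general l a q rp κ m hl hrp hκ hm
end

section
/- With the Kerr–Newman–AdS quantities M, S, J, Q, T, Ω, Φ regarded as smooth functions of the independent parameters (r₊, a, q) on the open domain where r₊ > 0, 0 ≤ |a| < l, Ξ = 1 − a²/l² ≠ 0 (and m eliminated via m = [ (r₊²+a²)(1+r₊²/l²) + q² ]/(2r₊)), the first law of black hole mechanics holds as an identity of differential one-forms: dM = T dS + Ω dJ + Φ dQ, i.e., ∂M/∂x = T ∂S/∂x + Ω ∂J/∂x + Φ ∂Q/∂x for each x ∈ {r₊, a, q}. -/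
/-
Eliminating `m` through the horizon equation, all the quantities are rational functions of
`(r₊, a, q)`, and `M`, `J`, `S`, `Q` carry the same normalisation `8π/κ²`, which factors out.
Along any differentiable curve in parameter space the first law then becomes a rational
identity that holds once the denominators `r₊`, `Ξ` and `r₊² + a²` are cleared; the three
partial-derivative identities are this identity along the coordinate lines.
-/

open Real

noncomputable section KNAdS

/-- `m` eliminated via the horizon condition: `m = [(r₊²+a²)(1+r₊²/l²)+q²]/(2r₊)`. -/
def KNm (l r a q : ℝ) : ℝ := ((r^2+a^2)*(1+r^2/l^2)+q^2)/(2*r)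

/-- Holographic mass `M = 8πm/(κ²Ξ²)`. -/
def KNM (l κ r a q : ℝ) : ℝ := 8*π*KNm l r a q/(κ^2*(1-a^2/l^2)^2)

/-- Angular momentum `J = 8πma/(κ²Ξ²)`. -/
def KNJ (l κ r a q : ℝ) : ℝ := 8*π*(KNm l r a q)*a/(κ^2*(1-a^2/l^2)^2)

/-- Electric charge `Q = 4πq/(κ²Ξ)`. -/
def KNQ (l κ r a q : ℝ) : ℝ := 4*π*q/(κ^2*(1-a^2/l^2))

/-- Entropy `S = 8π²(r₊²+a²)/(κ²Ξ)`. -/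
def KNS (l κ r a q : ℝ) : ℝ := 8*π^2*(r^2+a^2)/(κ^2*(1-a^2/l^2))

/-- Temperature `T`. -/
def KNT (l r a q : ℝ) : ℝ := r*(1+a^2/l^2+3*r^2/l^2-(a^2+q^2)/r^2)/(4*π*(r^2+a^2))

/-- Angular velocity `Ω = a(1+r₊²/l²)/(r₊²+a²)`. -/
def KNΩ (l r a : ℝ) : ℝ := a*(1+r^2/l^2)/(r^2+a^2)

/-- Electric potential `Φ = 2qr₊/(r₊²+a²)`. -/
def KNΦ (r a q : ℝ) : ℝ := 2*q*r/(r^2+a^2)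

theorem KNM_eq_mul (l κ r a q : ℝ) :
    KNM l κ r a q = 8*π/κ^2 * (KNm l r a q / (1 - a^2/l^2)^2) := by
  rw [KNM, div_mul_div_comm]

theorem KNJ_eq_mul (l κ r a q : ℝ) :
    KNJ l κ r a q = 8*π/κ^2 * (KNm l r a q * a / (1 - a^2/l^2)^2) := by
  rw [KNJ, div_mul_div_comm, mul_assoc]

theorem KNS_eq_mul (l κ r a q : ℝ) :
    KNS l κ r a q = 8*π/κ^2 * (π * (r^2 + a^2) / (1 - a^2/l^2)) := by
  rw [KNS, div_mul_div_comm]; ring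

theorem KNQ_eq_mul (l κ r a q : ℝ) :
    KNQ l κ r a q = 8*π/κ^2 * (q / 2 / (1 - a^2/l^2)) := by
  rw [KNQ, div_mul_div_comm]; ring

section Curve

variable {l κ : ℝ} {r a q : ℝ → ℝ} {r' a' q' t : ℝ}

theorem hasDerivAt_KNm_comp (hr : HasDerivAt r r' t) (ha : HasDerivAt a a' t)
    (hq : HasDerivAt q q' t) (hr0 : r t ≠ 0) :
    HasDerivAt (fun s => KNm l (r s) (a s) (q s))
      ((((2*r t*r' + 2*a t*a') * (1 + r t^2/l^2) + (r t^2 + a t^2) * (2*r t*r'/l^2)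
          + 2*q t*q') * (2*r t) - ((r t^2 + a t^2) * (1 + r t^2/l^2) + q t^2) * (2*r'))
        / (2*r t)^2) t := by
  have hnum := (((hr.pow 2).add (ha.pow 2)).mul (((hr.pow 2).div_const (l^2)).const_add 1)).add
    (hq.pow 2)
  refine (hnum.div (hr.const_mul 2) (mul_ne_zero two_ne_zero hr0)).congr_deriv ?_
  norm_num

theorem firstLaw_comp (hr : HasDerivAt r r' t) (ha : HasDerivAt a a' t)
    (hq : HasDerivAt q q' t) (hr0 : r t ≠ 0) (hΞ : 1 - a t^2/l^2 ≠ 0) :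
    deriv (fun s => KNM l κ (r s) (a s) (q s)) t =
        KNT l (r t) (a t) (q t) * deriv (fun s => KNS l κ (r s) (a s) (q s)) t
      + KNΩ l (r t) (a t) * deriv (fun s => KNJ l κ (r s) (a s) (q s)) t
      + KNΦ (r t) (a t) (q t) * deriv (fun s => KNQ l κ (r s) (a s) (q s)) t := by
  have hm := hasDerivAt_KNm_comp (l := l) hr ha hq hr0
  have hΞ' : HasDerivAt (fun s => 1 - a s^2/l^2) (-(2*a t*a'/l^2)) t := by
    refine ((ha.pow 2).div_const (l^2)).const_sub 1 |>.congr_deriv ?_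
    norm_num
  have hρ : HasDerivAt (fun s => r s^2 + a s^2) (2*r t*r' + 2*a t*a') t := by
    refine ((hr.pow 2).add (ha.pow 2)).congr_deriv ?_
    norm_num
  simp only [KNM_eq_mul, KNJ_eq_mul, KNS_eq_mul, KNQ_eq_mul, deriv_const_mul_field']
  have hM : HasDerivAt (fun s => KNm l (r s) (a s) (q s) / (1 - a s^2/l^2)^2) _ t :=
    hm.div (hΞ'.pow 2) (pow_ne_zero 2 hΞ)
  have hJ : HasDerivAt (fun s => KNm l (r s) (a s) (q s) * a s / (1 - a s^2/l^2)^2) _ t :=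
    (hm.mul ha).div (hΞ'.pow 2) (pow_ne_zero 2 hΞ)
  have hS : HasDerivAt (fun s => π * (r s^2 + a s^2) / (1 - a s^2/l^2)) _ t :=
    (hρ.const_mul π).div hΞ' hΞ
  have hQ : HasDerivAt (fun s => q s / 2 / (1 - a s^2/l^2)) _ t := (hq.div_const 2).div hΞ' hΞ
  rw [hM.deriv, hJ.deriv, hS.deriv, hQ.deriv]
  have hρ0 : r t^2 + a t^2 ≠ 0 := by positivity
  have hπ := pi_ne_zero
  simp only [Pi.mul_apply, KNT, KNΩ, KNΦ, KNm]
  field_simp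
  ring

end Curve

theorem stmt_10_general (l κ r a q : ℝ) (hr : 0 < r)
    (hΞ : 1 - a^2/l^2 ≠ 0) :
    (deriv (fun x => KNM l κ x a q) r =
        KNT l r a q * deriv (fun x => KNS l κ x a q) r
      + KNΩ l r a * deriv (fun x => KNJ l κ x a q) r
      + KNΦ r a q * deriv (fun x => KNQ l κ x a q) r) ∧
    (deriv (fun x => KNM l κ r x q) a =
        KNT l r a q * deriv (fun x => KNS l κ r x q) a
      + KNΩ l r a * deriv (fun x => KNJ l κ r x q) a
      + KNΦ r a q * deriv (fun x => KNQ l κ r x q) a) ∧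
    (deriv (fun x => KNM l κ r a x) q =
        KNT l r a q * deriv (fun x => KNS l κ r a x) q
      + KNΩ l r a * deriv (fun x => KNJ l κ r a x) q
      + KNΦ r a q * deriv (fun x => KNQ l κ r a x) q) := by
  refine ⟨?_, ?_, ?_⟩
  · exact firstLaw_comp (r := fun x => x) (a := fun _ => a) (q := fun _ => q)
      (hasDerivAt_id' r) (hasDerivAt_const r a) (hasDerivAt_const r q) hr.ne' hΞ
  · exact firstLaw_comp (r := fun _ => r) (a := fun x => x) (q := fun _ => q)
      (hasDerivAt_const a r) (hasDerivAt_id' a) (hasDerivAt_const a q) hr.ne' hΞ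
  · exact firstLaw_comp (r := fun _ => r) (a := fun _ => a) (q := fun x => x)
      (hasDerivAt_const q r) (hasDerivAt_const q a) (hasDerivAt_id' q) hr.ne' hΞ

/-- First law of black hole mechanics for the Kerr–Newman–AdS black
hole, `dM = T dS + Ω dJ + Φ dQ`, as an identity of one-forms on the parameter space
`(r₊, a, q)`: the partial derivative identity holds for each of the three independent
parameters. -/
theorem stmt_10 (l κ r a q : ℝ) (hl : 0 < l) (hκ : κ ≠ 0) (hr : 0 < r) (ha : |a| < l)
    (hΞ : 1 - a^2/l^2 ≠ 0) :
    (deriv (fun x => KNM l κ x a q) r =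
        KNT l r a q * deriv (fun x => KNS l κ x a q) r
      + KNΩ l r a * deriv (fun x => KNJ l κ x a q) r
      + KNΦ r a q * deriv (fun x => KNQ l κ x a q) r) ∧
    (deriv (fun x => KNM l κ r x q) a =
        KNT l r a q * deriv (fun x => KNS l κ r x q) a
      + KNΩ l r a * deriv (fun x => KNJ l κ r x q) a
      + KNΦ r a q * deriv (fun x => KNQ l κ r x q) a) ∧
    (deriv (fun x => KNM l κ r a x) q =
        KNT l r a q * deriv (fun x => KNS l κ r a x) q
      + KNΩ l r a * deriv (fun x => KNJ l κ r a x) q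
      + KNΦ r a q * deriv (fun x => KNQ l κ r a x) q) :=
  stmt_10_general l κ r a q hr hΞ

end KNAdS
end

section
/- Let C and C' be two Cauchy surfaces in an asymptotically locally AdS spacetime whose intersections with the conformal boundary ∂M bound a region Δ ⊂ ∂M, and suppose the Noether current J[ξ] = Θ(ψ, L_ξψ) − i_ξ L satisfies dJ[ξ] = 0 on-shell. Define the charge Q_C[ξ] = ∫_{∂M∩C} ( Q[ξ] − i_ξ B ) with J[ξ] = dQ[ξ]. If the pullback of J[ξ] − d(i_ξ B) to ∂M, integrated over Δ, equals ∫_Δ d^dx √(−γ) 𝒜 (1/d) D_iξ^i for the conformal anomaly density 𝒜, then Q_C[ξ] − Q_{C'}[ξ] = ∫_Δ d^dx √(−γ) 𝒜 (1/d) D_iξ^i. In particular, Q[ξ] is conserved (independent of the Cauchy surface) whenever 𝒜 = 0 or ξ is a boundary Killing vector (D_iξ^i = 0 and L_ξ of all boundary fields vanishes). -/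
/-- **conservation of the Noether charge up to the anomaly.**
Abstract encoding: `V` is the space of forms on the boundary `∂M` (pullbacks of bulk
forms) with exterior derivative `d`; the Noether current `J = J[ξ]` is closed on-shell
and exact, `J = dQ`; `iξB` is the form `i_ξ B` built from the boundary counterterm form
`B`; `IC, IC'` integrate over `∂M ∩ C` and `∂M ∩ C'`, and `IΔ` over the region
`Δ ⊂ ∂M` they bound, with `hStokes` Stokes' theorem for this configuration. `P` is the
set of points of `Δ`, `intΔ` the integral of functions over `Δ` (a linear functional),
`sqrtγ` the boundary volume density, `𝒜` the conformal anomaly density and `divξ` the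
divergence `D_iξ^i` of the asymptotic conformal Killing vector. Given that the pullback
of `J[ξ] − d(i_ξB)` integrates over `Δ` to `∫_Δ √(−γ) 𝒜 (1/d) D_iξ^i`, the charge
difference `Q_C[ξ] − Q_{C'}[ξ]` equals this anomaly integral; in particular the charge
is conserved if `𝒜 = 0` or `ξ` is a boundary Killing vector (`D_iξ^i = 0`). -/
theorem stmt_15 (V : Type*) [AddCommGroup V] (d : V →+ V)
    (J Q iξB : V)
    (hJclosed : d J = 0)
    (hJQ : J = d Q)
    (IC IC' IΔ : V →+ ℝ)
    (hStokes : ∀ η : V, IΔ (d η) = IC η - IC' η)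
    (P : Type*) (intΔ : (P → ℝ) →ₗ[ℝ] ℝ)
    (dd : ℕ) (sqrtγ 𝒜 divξ : P → ℝ)
    (hanom : IΔ (J - d iξB) = intΔ (fun p => sqrtγ p * 𝒜 p * ((1:ℝ)/(dd:ℝ)) * divξ p)) :
    (IC (Q - iξB) - IC' (Q - iξB) = intΔ (fun p => sqrtγ p * 𝒜 p * ((1:ℝ)/(dd:ℝ)) * divξ p)) ∧
    ((𝒜 = 0 ∨ divξ = 0) → IC (Q - iξB) = IC' (Q - iξB)) := by
  have key : IC (Q - iξB) - IC' (Q - iξB) = intΔ (fun p => sqrtγ p * 𝒜 p * ((1:ℝ)/(dd:ℝ)) * divξ p) := by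
    rw [← hStokes, map_sub d, ← hJQ, hanom]
  refine ⟨key, fun h => ?_⟩
  have hz : (fun p => sqrtγ p * 𝒜 p * ((1:ℝ)/(dd:ℝ)) * divξ p) = (0 : P → ℝ) := by
    rcases h with h | h <;> funext p <;> simp [congrFun h p]
  have := key
  rw [hz, map_zero] at this
  linarith
end

section
/- For the five-dimensional Kerr–AdS black hole with parameters a, b (|a|, |b| < l), r₊ > 0, Ξ_a = 1 − a²/l², Ξ_b = 1 − b²/l², and m determined by the horizon condition (1/r₊²)(r₊²+a²)(r₊²+b²)(1 + r₊²/l²) = 2m, define: β = 2π[ r₊(1+r₊²/l²)( 1/(r₊²+a²) + 1/(r₊²+b²) ) − 1/r₊ ]⁻¹, S = (2π/κ²)·2π²(r₊²+a²)(r₊²+b²)/(r₊ Ξ_a Ξ_b), Ω_a = a(1+r₊²/l²)/(r₊²+a²), Ω_b = b(1+r₊²/l²)/(r₊²+b²), J_a = 4π²ma/(κ²Ξ_a²Ξ_b), J_b = 4π²mb/(κ²Ξ_aΞ_b²), M = M_Cas + 2π²m(2Ξ_a + 2Ξ_b − Ξ_aΞ_b)/(κ²Ξ_a²Ξ_b²)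 with M_Cas = (3π²l²/(4κ²))(1 + (Ξ_a−Ξ_b)²/(9Ξ_aΞ_b)), and I = βM_Cas + (2π²β/(κ²l²Ξ_aΞ_b))[ ml² − (r₊²+a²)(r₊²+b²) ]. Then the quantum statistical relation I = β( M − S/β − Ω_a J_a − Ω_b J_b ) holds identically. -/
set_option maxHeartbeats 2000000


/-- Quantum statistical relation `I = β(M − TS − Ω_aJ_a − Ω_bJ_b)`
(with `TS = S/β · β`, i.e. `M − S/β − ...`) for the general five-dimensional Kerr–AdS
black hole, as a purely algebraic identity in the parameters `l, a, b, r₊, κ`, with `m`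
determined by the horizon condition `(1/r₊²)(r₊²+a²)(r₊²+b²)(1+r₊²/l²) = 2m`.
The Casimir energy `M_Cas` appears both in the mass `M` and in the action `I`. -/
theorem stmt_16 (l a b rp κ m : ℝ)
    (hl : 0 < l) (ha : |a| < l) (hb : |b| < l) (hrp : 0 < rp) (hκ : κ ≠ 0)
    (hm : (1/rp^2) * (rp^2+a^2) * (rp^2+b^2) * (1+rp^2/l^2) = 2*m)
    (hΞa : 1 - a^2/l^2 ≠ 0) (hΞb : 1 - b^2/l^2 ≠ 0)
    (hβden : rp*(1+rp^2/l^2)*(1/(rp^2+a^2) + 1/(rp^2+b^2)) - 1/rp ≠ 0) :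
    let Ξa : ℝ := 1 - a^2/l^2
    let Ξb : ℝ := 1 - b^2/l^2
    let β : ℝ := 2*Real.pi / (rp*(1+rp^2/l^2)*(1/(rp^2+a^2) + 1/(rp^2+b^2)) - 1/rp)
    let S : ℝ := (2*Real.pi/κ^2) * (2*Real.pi^2*(rp^2+a^2)*(rp^2+b^2)/(rp*Ξa*Ξb))
    let Ωa : ℝ := a*(1+rp^2/l^2)/(rp^2+a^2)
    let Ωb : ℝ := b*(1+rp^2/l^2)/(rp^2+b^2)
    let Ja : ℝ := 4*Real.pi^2*m*a/(κ^2*Ξa^2*Ξb)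
    let Jb : ℝ := 4*Real.pi^2*m*b/(κ^2*Ξa*Ξb^2)
    let MCas : ℝ := (3*Real.pi^2*l^2/(4*κ^2)) * (1 + (Ξa-Ξb)^2/(9*Ξa*Ξb))
    let M : ℝ := MCas + 2*Real.pi^2*m*(2*Ξa + 2*Ξb - Ξa*Ξb)/(κ^2*Ξa^2*Ξb^2)
    let I : ℝ := β*MCas + (2*Real.pi^2*β/(κ^2*l^2*Ξa*Ξb)) * (m*l^2 - (rp^2+a^2)*(rp^2+b^2))
    I = β * (M - S/β - Ωa*Ja - Ωb*Jb) := by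
  have hra : (rp^2 + a^2 : ℝ) ≠ 0 := by positivity
  have hrb : (rp^2 + b^2 : ℝ) ≠ 0 := by positivity
  have hl' : l ≠ 0 := ne_of_gt hl
  have hrp' : rp ≠ 0 := ne_of_gt hrp
  have hπ : Real.pi ≠ 0 := Real.pi_ne_zero
  have hβ : 2*Real.pi / (rp*(1+rp^2/l^2)*(1/(rp^2+a^2) + 1/(rp^2+b^2)) - 1/rp) ≠ 0 := div_ne_zero (by positivity) hβden
  have hla : l^2 - a^2 ≠ 0 := by
    intro h; apply hΞa; field_simp; linarith
  have hlb : l^2 - b^2 ≠ 0 := by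
    intro h; apply hΞb; field_simp; linarith
  have hm' : m = (rp^2+a^2)*(rp^2+b^2)*(1+rp^2/l^2)/(2*rp^2) := by
    field_simp at hm ⊢; linarith
  subst hm'
  have key : 2*Real.pi * (((3*Real.pi^2*l^2/(4*κ^2)) * (1 + ((1 - a^2/l^2)-(1 - b^2/l^2))^2/(9*(1 - a^2/l^2)*(1 - b^2/l^2)))) + 2*Real.pi^2*(((rp^2+a^2)*(rp^2+b^2)*(1+rp^2/l^2)/(2*rp^2))*l^2 - (rp^2+a^2)*(rp^2+b^2))/(κ^2*l^2*(1 - a^2/l^2)*(1 - b^2/l^2)) - (((3*Real.pi^2*l^2/(4*κ^2)) * (1 + ((1 - a^2/l^2)-(1 - b^2/l^2))^2/(9*(1 - a^2/l^2)*(1 - b^2/l^2)))) + 2*Real.pi^2*((rp^2+a^2)*(rp^2+b^2)*(1+rp^2/l^2)/(2*rp^2))*(2*(1 - a^2/l^2) + 2*(1 - b^2/l^2) - (1 - a^2/l^2)*(1 - b^2/l^2))/(κ^2*(1 - a^2/l^2)^2*(1 - b^2/l^2)^2)) + (a*(1+rp^2/l^2)/(rp^2+a^2))*(4*Real.pi^2*((rp^2+a^2)*(rp^2+b^2)*(1+rp^2/l^2)/(2*rp^2))*a/(κ^2*(1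 - a^2/l^2)^2*(1 - b^2/l^2))) + (b*(1+rp^2/l^2)/(rp^2+b^2))*(4*Real.pi^2*((rp^2+a^2)*(rp^2+b^2)*(1+rp^2/l^2)/(2*rp^2))*b/(κ^2*(1 - a^2/l^2)*(1 - b^2/l^2)^2))) = -(((2*Real.pi/κ^2) * (2*Real.pi^2*(rp^2+a^2)*(rp^2+b^2)/(rp*(1 - a^2/l^2)*(1 - b^2/l^2)))) * (rp*(1+rp^2/l^2)*(1/(rp^2+a^2) + 1/(rp^2+b^2)) - 1/rp)) := by
    field_simp
    ring
  have hGd : (2*Real.pi/(rp*(1+rp^2/l^2)*(1/(rp^2+a^2) + 1/(rp^2+b^2)) - 1/rp)) * (((3*Real.pi^2*l^2/(4*κ^2)) * (1 + ((1 - a^2/l^2)-(1 - b^2/l^2))^2/(9*(1 - a^2/l^2)*(1 - b^2/l^2)))) + 2*Real.pi^2*(((rp^2+a^2)*(rp^2+b^2)*(1+rp^2/l^2)/(2*rp^2))*l^2 - (rp^2+a^2)*(rp^2+b^2))/(κ^2*l^2*(1 - a^2/l^2)*(1 - b^2/l^2)) - (((3*Real.pi^2*l^2/(4*κ^2)) *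 (1 + ((1 - a^2/l^2)-(1 - b^2/l^2))^2/(9*(1 - a^2/l^2)*(1 - b^2/l^2)))) + 2*Real.pi^2*((rp^2+a^2)*(rp^2+b^2)*(1+rp^2/l^2)/(2*rp^2))*(2*(1 - a^2/l^2) + 2*(1 - b^2/l^2) - (1 - a^2/l^2)*(1 - b^2/l^2))/(κ^2*(1 - a^2/l^2)^2*(1 - b^2/l^2)^2)) + (a*(1+rp^2/l^2)/(rp^2+a^2))*(4*Real.pi^2*((rp^2+a^2)*(rp^2+b^2)*(1+rp^2/l^2)/(2*rp^2))*a/(κ^2*(1 - a^2/l^2)^2*(1 - b^2/l^2))) + (b*(1+rp^2/l^2)/(rp^2+b^2))*(4*Real.pi^2*((rp^2+a^2)*(rp^2+b^2)*(1+rp^2/l^2)/(2*rp^2))*b/(κ^2*(1 - a^2/l^2)*(1 - b^2/l^2)^2))) = -((2*Real.pi/κ^2) * (2*Real.pi^2*(rp^2+a^2)*(rp^2+b^2)/(rp*(1 - a^2/l^2)*(1 - b^2/l^2)))) := by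
    rw [div_mul_eq_mul_div, key, neg_div, mul_div_assoc, div_self hβden, mul_one]
  have hS : (2*Real.pi/(rp*(1+rp^2/l^2)*(1/(rp^2+a^2) + 1/(rp^2+b^2)) - 1/rp)) * (((2*Real.pi/κ^2) * (2*Real.pi^2*(rp^2+a^2)*(rp^2+b^2)/(rp*(1 - a^2/l^2)*(1 - b^2/l^2)))) / (2*Real.pi/(rp*(1+rp^2/l^2)*(1/(rp^2+a^2) + 1/(rp^2+b^2)) - 1/rp))) = ((2*Real.pi/κ^2) * (2*Real.pi^2*(rp^2+a^2)*(rp^2+b^2)/(rp*(1 - a^2/l^2)*(1 - b^2/l^2)))) := by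
    rw [mul_comm]; exact div_mul_cancel₀ _ hβ
  simp only
  linear_combination hGd + hS
end

section
/- Let χ be a Killing vector of an on-shell field configuration ψ (L_χψ = 0) tangent to the horizon cross-section H, and let δψ solve the linearized equations with ω(ψ, δψ, L_χψ) = d( δQ[χ] − i_χΘ(ψ,δψ) ) on-shell. Then for any Cauchy surface C stretching from H to the conformal boundary, ∫_{∂M∩C} ( δQ[χ] − i_χΘ ) = ∫_H δQ[χ]. If moreover ∫_{∂M∩C}( δQ[χ] − i_χΘ ) = −(δM − Ω_i δJ_i) and −∫_H δQ[χ] = TδS + ΦδQ, the first law δM = TδS + Ω_iδJ_i + ΦδQ follows. -/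
/-- **Wald's derivation of the first law for AlAdS black holes.**
Abstract encoding: `V` is the space of spacetime forms with exterior derivative `d`;
`W` the space of field variations, and `ω₂ : W →+ V` the symplectic current
`ω(ψ, δψ, ·)` as an additive function of its third argument. `Lχψ` is the variation
generated by the Killing vector `χ`, which vanishes (`hKilling`). `δQ` and `iχΘ` are
the forms `δQ[χ]` and `i_χΘ(ψ,δψ)`, and `hfund` is the on-shell identity
`ω(ψ,δψ,L_χψ) = d(δQ[χ] − i_χΘ)`. `Ibdry, IH, ICau` integrate over `∂M ∩ C`, the
horizon cross-section `H`, and the Cauchy surface `C` stretching between them;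
`hStokes` is Stokes' theorem for this configuration, and `hiχΘH` expresses that the
pullback of `i_χΘ` to `H` integrates to zero. Conclusions: the fundamental identity
`∫_{∂M∩C}(δQ[χ] − i_χΘ) = ∫_H δQ[χ]`, and, given the identifications of the two sides
with `−(δM − Ω_iδJ_i)` and `TδS + ΦδQ` respectively, the first law
`δM = TδS + Ω_iδJ_i + ΦδQ`. -/
theorem stmt_18 (V W : Type*) [AddCommGroup V] [AddCommGroup W]
    (d : V →+ V) (ω₂ : W →+ V)
    (Lχψ : W) (hKilling : Lχψ = 0)
    (δQ iχΘ : V)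
    (hfund : d (δQ - iχΘ) = ω₂ Lχψ)
    (Ibdry IH ICau : V →+ ℝ)
    (hStokes : ∀ η : V, Ibdry η - IH η = ICau (d η))
    (hiχΘH : IH iχΘ = 0) :
    (Ibdry (δQ - iχΘ) = IH δQ) ∧
    (∀ (k : ℕ) (δM T δS Φe δQe : ℝ) (Ω δJ : Fin k → ℝ),
      Ibdry (δQ - iχΘ) = -(δM - ∑ i, Ω i * δJ i) →
      -(IH δQ) = T * δS + Φe * δQe →
      δM = T * δS + (∑ i, Ω i * δJ i) + Φe * δQe) := by
  have h0 : d (δQ - iχΘ) = 0 := by rw [hfund, hKilling, map_zero]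
  have h1 : Ibdry (δQ - iχΘ) = IH δQ := by
    have := hStokes (δQ - iχΘ)
    rw [h0, map_zero, sub_eq_zero] at this
    rw [this, map_sub, hiχΘH, sub_zero]
  refine ⟨h1, fun k δM T δS Φe δQe Ω δJ hA hB => ?_⟩
  rw [h1] at hA
  linarith
end
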